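/- Let L be an even lattice, a ∈ L with (a,a) = -2, and z ∈ L isotropic with (a,z)=0. Then t(z,a) = R_a ∘ R_{a - z}, where R_v(x) = x - 2((v,x)/(v,v))v denotes the reflection in a vector v of square -2. -/

import Mathlib

variable {M : Type*} [AddCommGroup M] [Module ℤ M]

/-- The transvection `t(z,a)(x) = x - (a,x)z + (z,x)a - (1/2)(a,a)(z,x)z`. -/
def transv (B : M →ₗ[ℤ] M →ₗ[ℤ] ℤ) (z a x : M) : M :=
  x - B a x • z + B z x • a - (B a a / 2 * B z x) • z

/-- The reflection `R_v(x) = x + (v,x)v` in a vector of square `-2`. -/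
def reflNegTwo (B : M →ₗ[ℤ] M →ₗ[ℤ] ℤ) (v x : M) : M :=
  x + B v x • v

theorem reflNegTwo_reflNegTwo (B : M →ₗ[ℤ] M →ₗ[ℤ] ℤ) (u v x : M) :
    reflNegTwo B u (reflNegTwo B v x) = x + B v x • v + (B u x + B v x * B u v) • u := by
  simp only [reflNegTwo, map_add, map_zsmul, smul_eq_mul]

theorem transv_of_apply_self_eq_neg_two (B : M →ₗ[ℤ] M →ₗ[ℤ] ℤ) {a : M} (ha : B a a = -2)
    (z x : M) : transv B z a x = x - B a x • z + B z x • a + B z x • z := by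
  simp only [transv, ha, show (-2 : ℤ) / 2 = -1 by rfl, neg_one_mul, neg_zsmul, sub_neg_eq_add]

theorem transv_eq_refl_comp_refl_general
    (B : M →ₗ[ℤ] M →ₗ[ℤ] ℤ)
    (z a : M) (haz : B a z = 0) (ha : B a a = -2) :
    ∀ x, transv B z a x = reflNegTwo B a (reflNegTwo B (a - z) x) := by
  intro x
  have ha_sub : B a (a - z) = -2 := by rw [map_sub, ha, haz, sub_zero]
  rw [transv_of_apply_self_eq_neg_two B ha, reflNegTwo_reflNegTwo, ha_sub,
    map_sub, LinearMap.sub_apply]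
  -- `•` here is `zsmul`, not the action of `[Module ℤ M]`, so `module` does not apply.
  simp only [zsmul_sub, sub_zsmul, add_zsmul, mul_neg, neg_zsmul, mul_comm _ (2 : ℤ), mul_zsmul]
  abel

theorem transv_eq_refl_comp_refl [Module.Free ℤ M] [Module.Finite ℤ M]
    (B : M →ₗ[ℤ] M →ₗ[ℤ] ℤ)
    (hsymm : ∀ x y, B x y = B y x)
    (hnd : ∀ x, (∀ y, B x y = 0) → x = 0)
    (heven : ∀ x, 2 ∣ B x x)
    (z a : M) (hz : B z z = 0) (haz : B a z = 0) (ha : B a a = -2) :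
    ∀ x, transv B z a x = reflNegTwo B a (reflNegTwo B (a - z) x) :=
  transv_eq_refl_comp_refl_general B z a haz ha
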